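/- Let X → B be a Boolean set and for a ∈ X let L(a) be the set of ultrafilters of X containing a. Then: (1) L(a) ⊆ L(b) iff a ≤ b; (2) L(a) = L(b) iff a = b; (3) if a ∼ b then L(a ∨ b) = L(a) ∪ L(b). -/
import Mathlib


/-- A presheaf of sets over a meet-semilattice `E`: a carrier `X` with projection
`p : X → E` and restriction maps `res x f h : X` for `f ≤ p x`, satisfying the
identity and composition laws. -/
structure PresheafOfSets (E : Type*) [SemilatticeInf E] where
  X : Type*
  p : X → E
  res : ∀ x : X, ∀ f : E, f ≤ p x → X
  p_res : ∀ x f h, p (res x f h) = f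
  res_self : ∀ x, res x (p x) le_rfl = x
  res_comp : ∀ x f g (hf : f ≤ p x) (_ : g ≤ f) (hg : g ≤ p x)
      (hg' : g ≤ p (res x f hf)), res (res x f hf) g hg' = res x g hg

namespace PresheafOfSets

variable {E : Type*} [SemilatticeInf E] (P : PresheafOfSets E)

/-- The natural partial order: `x ≤ y` iff `x` is the restriction of `y` to `p x`. -/
def le (x y : P.X) : Prop := ∃ h : P.p x ≤ P.p y, x = P.res y (P.p x) h

/-- The right normal band operation `x ∘ y = y|^{p y}_{p x ⊓ p y}`. -/
def circ (x y : P.X) : P.X := P.res y (P.p x ⊓ P.p y) inf_le_right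

/-- `m` is the meet of `x` and `y` with respect to the natural partial order. -/
def IsMeet (m x y : P.X) : Prop :=
  P.le m x ∧ P.le m y ∧ ∀ z, P.le z x → P.le z y → P.le z m

/-- `j` is the join of `x` and `y` with respect to the natural partial order. -/
def IsJoin (j x y : P.X) : Prop :=
  P.le x j ∧ P.le y j ∧ ∀ z, P.le x z → P.le y z → P.le j z

/-- `x ∼ y`: the meet `x ∧ y` exists and `p (x ∧ y) = p x ⊓ p y`. -/
def Compatible (x y : P.X) : Prop :=
  ∃ m, P.IsMeet m x y ∧ P.p m = P.p x ⊓ P.p y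

end PresheafOfSets

/-- A Boolean set: a presheaf of sets with global support over a generalized Boolean
algebra `B`, with a minimum element `zero`, joins of compatible pairs, and such that
`p x = ⊥` implies `x = zero`. -/
structure BooleanSet (B : Type*) [GeneralizedBooleanAlgebra B] extends PresheafOfSets B where
  p_surj : Function.Surjective toPresheafOfSets.p
  zero : toPresheafOfSets.X
  zero_le : ∀ x, toPresheafOfSets.le zero x
  eq_zero : ∀ x, toPresheafOfSets.p x = ⊥ → x = zero
  join_exists : ∀ x y, toPresheafOfSets.Compatible x y →
    ∃ j, toPresheafOfSets.IsJoin j x y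

namespace BooleanSet

variable {B : Type*} [GeneralizedBooleanAlgebra B] (S : BooleanSet B)

/-- `y \ x = y|^{p y}_{p y \ p x}`. -/
def minus (y x : S.X) : S.X := S.res y (S.p y \ S.p x) sdiff_le

end BooleanSet

namespace BooleanSet

variable {B : Type*} [GeneralizedBooleanAlgebra B] (S : BooleanSet B)

/-- A filter in the Boolean set `S`: nonempty, down-directed, upward closed with
respect to the natural partial order. -/
def IsFilterX (G : Set S.X) : Prop :=
  G.Nonempty ∧ (∀ x ∈ G, ∀ y ∈ G, ∃ z ∈ G, S.le z x ∧ S.le z y) ∧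
    (∀ x ∈ G, ∀ y, S.le x y → y ∈ G)

/-- A proper filter in `S`. -/
def IsProperFilterX (G : Set S.X) : Prop := S.IsFilterX G ∧ G ≠ Set.univ

/-- An ultrafilter in `S`: a maximal proper filter. -/
def IsUltrafilterX (G : Set S.X) : Prop :=
  S.IsProperFilterX G ∧ ∀ H : Set S.X, S.IsProperFilterX H → G ⊆ H → G = H

end BooleanSet

/-- For `a` in a Boolean set `S`, `L a` is the set of ultrafilters of `S` containing `a`. -/
def Lset {B : Type*} [GeneralizedBooleanAlgebra B] (S : BooleanSet B) (a : S.X) :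
    Set (Set S.X) := {G | S.IsUltrafilterX G ∧ a ∈ G}


/- ======================= Auxiliary development ======================= -/

section Aux

variable {B : Type*} [GeneralizedBooleanAlgebra B] (S : BooleanSet B)

namespace BooleanSet

theorem res_congr {x y : S.X} {f g : B} (hxy : x = y) (hfg : f = g)
    (hf : f ≤ S.p x) (hg : g ≤ S.p y) : S.res x f hf = S.res y g hg := by
  subst hxy; subst hfg; rfl

theorem le_refl' (x : S.X) : S.le x x := ⟨le_rfl, (S.res_self x).symm⟩

theorem res_of_le {x y : S.X} (hxy : S.le x y) {g : B}
    (hg : g ≤ S.p x) (hg' : g ≤ S.p y) : S.res x g hg = S.res y g hg' := by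
  obtain ⟨h, e⟩ := hxy
  calc S.res x g hg
      = S.res (S.res y (S.p x) h) g (by rw [S.p_res]; exact hg) :=
        res_congr S e rfl _ _
    _ = S.res y g hg' := S.res_comp y (S.p x) g h hg hg' _

theorem le_trans' {x y z : S.X} (h1 : S.le x y) (h2 : S.le y z) : S.le x z :=
  ⟨h1.1.trans h2.1, h1.2.trans (res_of_le S h2 h1.1 (h1.1.trans h2.1))⟩

theorem eq_of_le_of_p_eq {x y : S.X} (h : S.le x y) (hp : S.p x = S.p y) : x = y := by
  obtain ⟨h1, e⟩ := h
  rw [e]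
  exact (res_congr S rfl hp _ le_rfl).trans (S.res_self y)

theorem le_antisymm' {x y : S.X} (h1 : S.le x y) (h2 : S.le y x) : x = y :=
  eq_of_le_of_p_eq S h1 (le_antisymm h1.1 h2.1)

theorem res_le' (x : S.X) (f : B) (h : f ≤ S.p x) : S.le (S.res x f h) x :=
  ⟨by rw [S.p_res]; exact h, res_congr S rfl (S.p_res x f h).symm _ _⟩

theorem res_le_res' (x : S.X) {f g : B} (hgf : g ≤ f) (hf : f ≤ S.p x)
    (hg : g ≤ S.p x) (hg' : g ≤ S.p (S.res x f hf)) :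
    S.le (S.res x g hg) (S.res x f hf) := by
  refine ⟨by rw [S.p_res, S.p_res]; exact hgf, ?_⟩
  calc S.res x g hg
      = S.res (S.res x f hf) g hg' := (S.res_comp x f g hf hgf hg hg').symm
    _ = S.res (S.res x f hf) (S.p (S.res x g hg)) _ :=
        res_congr S rfl (S.p_res x g hg).symm _ _

theorem p_zero : S.p S.zero = ⊥ := by
  obtain ⟨x, hx⟩ := S.p_surj ⊥
  exact le_bot_iff.mp (hx ▸ (S.zero_le x).1)

theorem eq_zero_of_le_zero {x : S.X} (h : S.le x S.zero) : x = S.zero :=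
  S.eq_zero x (le_bot_iff.mp ((p_zero S) ▸ h.1))

theorem filter_univ_of_zero_mem {H : Set S.X} (hH : S.IsFilterX H)
    (h0 : S.zero ∈ H) : H = Set.univ :=
  Set.eq_univ_of_forall fun y => hH.2.2 S.zero h0 y (S.zero_le y)

/-- The restriction `res x (e ⊓ f)` is the meet of `res x e` and `res x f`. -/
theorem compat_res (x : S.X) {e f : B} (he : e ≤ S.p x) (hf : f ≤ S.p x) :
    S.Compatible (S.res x e he) (S.res x f hf) := by
  refine ⟨S.res x (e ⊓ f) (inf_le_left.trans he), ⟨?_, ?_, ?_⟩, ?_⟩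
  · exact res_le_res' S x inf_le_left he _ (by rw [S.p_res]; exact inf_le_left)
  · exact res_le_res' S x inf_le_right hf _ (by rw [S.p_res]; exact inf_le_right)
  · intro z hz1 hz2
    have hpz1 : S.p z ≤ e := (S.p_res x e he) ▸ hz1.1
    have hpz2 : S.p z ≤ f := (S.p_res x f hf) ▸ hz2.1
    have hzx : z = S.res x (S.p z) (hpz1.trans he) :=
      hz1.2.trans (res_of_le S (res_le' S x e he) hz1.1 (hpz1.trans he))
    refine ⟨by rw [S.p_res]; exact le_inf hpz1 hpz2, ?_⟩
    exact hzx.trans (res_of_le S (res_le' S x (e ⊓ f) (inf_le_left.trans he))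
      (by rw [S.p_res]; exact le_inf hpz1 hpz2) (hpz1.trans he)).symm
  · rw [S.p_res, S.p_res, S.p_res]

theorem join_res (x : S.X) {e f : B} (he : e ≤ S.p x) (hf : f ≤ S.p x) {j : S.X}
    (hj : S.IsJoin j (S.res x e he) (S.res x f hf)) :
    j = S.res x (e ⊔ f) (sup_le he hf) := by
  have hle : S.le j (S.res x (e ⊔ f) (sup_le he hf)) := by
    refine hj.2.2 _ ?_ ?_
    · exact res_le_res' S x le_sup_left (sup_le he hf) he
        (by rw [S.p_res]; exact le_sup_left)
    · exact res_le_res' S x le_sup_right (sup_le he hf) hf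
        (by rw [S.p_res]; exact le_sup_right)
  have hpj : S.p j = e ⊔ f := by
    refine le_antisymm ((S.p_res x (e ⊔ f) _) ▸ hle.1) (sup_le ?_ ?_)
    · exact (S.p_res x e he) ▸ hj.1.1
    · exact (S.p_res x f hf) ▸ hj.2.1.1
  exact eq_of_le_of_p_eq S hle (by rw [hpj, S.p_res])

theorem res_glue {x y : S.X} {e f : B} (he : e ≤ S.p x) (he' : e ≤ S.p y)
    (hf : f ≤ S.p x) (hf' : f ≤ S.p y)
    (h1 : S.res x e he = S.res y e he') (h2 : S.res x f hf = S.res y f hf') :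
    S.res x (e ⊔ f) (sup_le he hf) = S.res y (e ⊔ f) (sup_le he' hf') := by
  obtain ⟨j, hj⟩ := S.join_exists _ _ (compat_res S x he hf)
  have A : j = S.res x (e ⊔ f) (sup_le he hf) := join_res S x he hf hj
  have hj' : S.IsJoin j (S.res y e he') (S.res y f hf') := by rwa [← h1, ← h2]
  have B' : j = S.res y (e ⊔ f) (sup_le he' hf') := join_res S y he' hf' hj'
  exact A.symm.trans B'

end BooleanSet

/- ---------------- filters in the base algebra B ---------------- -/

def IsPFilterB (F : Set B) : Prop :=
  F.Nonempty ∧ ⊥ ∉ F ∧ (∀ x ∈ F, ∀ y ∈ F, x ⊓ y ∈ F) ∧ ∀ x ∈ F, ∀ y, x ≤ y → y ∈ F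

def IsUltraB (U : Set B) : Prop :=
  IsPFilterB U ∧ ∀ b, (∀ e ∈ U, b ⊓ e ≠ ⊥) → b ∈ U

theorem exists_ultraB {F : Set B} (hF : IsPFilterB F) :
    ∃ U : Set B, F ⊆ U ∧ IsUltraB U := by
  obtain ⟨U, hFU, hUmax⟩ := zorn_subset_nonempty {G : Set B | IsPFilterB G}
    (fun c hcS hchain hcne => by
      refine ⟨⋃₀ c, ⟨?_, ?_, ?_, ?_⟩, fun s hs => Set.subset_sUnion_of_mem hs⟩
      · obtain ⟨G, hG⟩ := hcne
        obtain ⟨g, hg⟩ := (hcS hG).1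
        exact ⟨g, G, hG, hg⟩
      · rintro ⟨G, hG, hbot⟩
        exact (hcS hG).2.1 hbot
      · rintro x ⟨G1, hG1, hx⟩ y ⟨G2, hG2, hy⟩
        rcases hchain.total hG1 hG2 with h | h
        · exact ⟨G2, hG2, (hcS hG2).2.2.1 x (h hx) y hy⟩
        · exact ⟨G1, hG1, (hcS hG1).2.2.1 x hx y (h hy)⟩
      · rintro x ⟨G, hG, hx⟩ y hxy
        exact ⟨G, hG, (hcS hG).2.2.2 x hx y hxy⟩) F hF
  have hU : IsPFilterB U := hUmax.1
  refine ⟨U, hFU, hU, fun b hb => ?_⟩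
  set U' : Set B := {c | ∃ e ∈ U, b ⊓ e ≤ c} with hU'def
  have hU'F : IsPFilterB U' := by
    obtain ⟨e0, he0⟩ := hU.1
    refine ⟨⟨b, e0, he0, inf_le_left⟩, ?_, ?_, ?_⟩
    · rintro ⟨e, heU, hle⟩
      exact hb e heU (le_bot_iff.mp hle)
    · rintro x ⟨e1, he1, h1⟩ y ⟨e2, he2, h2⟩
      exact ⟨e1 ⊓ e2, hU.2.2.1 e1 he1 e2 he2,
        le_inf ((inf_le_inf_left b inf_le_left).trans h1)
          ((inf_le_inf_left b inf_le_right).trans h2)⟩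
    · rintro x ⟨e, heU, h⟩ y hxy
      exact ⟨e, heU, h.trans hxy⟩
  have hsub : U ⊆ U' := fun e he => ⟨e, he, inf_le_right⟩
  have : U' = U := Set.Subset.antisymm (hUmax.2 hU'F hsub) hsub
  rw [← this]
  obtain ⟨e0, he0⟩ := hU.1
  exact ⟨e0, he0, inf_le_left⟩

/- ---------------- the ultrafilter of X attached to an ultrafilter of B ---------------- -/

open BooleanSet in
/-- The set of elements of `X` agreeing with `a` on some element of `U`. -/
def GU (a : S.X) (U : Set B) : Set S.X :=
  {y | ∃ e ∈ U, ∃ (h1 : e ≤ S.p a) (h2 : e ≤ S.p y), S.res a e h1 = S.res y e h2}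

open BooleanSet

theorem res_mem_GU {a : S.X} {U : Set B} {e : B} (heU : e ∈ U) (h : e ≤ S.p a) :
    S.res a e h ∈ GU S a U := by
  refine ⟨e, heU, h, le_of_eq (S.p_res a e h).symm, ?_⟩
  exact (S.res_comp a e e h le_rfl h (le_of_eq (S.p_res a e h).symm)).symm

theorem self_mem_GU {a : S.X} {U : Set B} (ha : S.p a ∈ U) : a ∈ GU S a U :=
  ⟨S.p a, ha, le_rfl, le_rfl, rfl⟩

theorem GU_ultrafilter {a : S.X} {U : Set B} (hU : IsUltraB U) (ha : S.p a ∈ U) :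
    S.IsUltrafilterX (GU S a U) := by
  have hzero : S.zero ∉ GU S a U := by
    rintro ⟨e, heU, h1, h2, -⟩
    rw [p_zero S] at h2
    exact hU.1.2.1 (le_bot_iff.mp h2 ▸ heU)
  have hfil : S.IsFilterX (GU S a U) := by
    refine ⟨⟨a, self_mem_GU S ha⟩, ?_, ?_⟩
    · rintro y1 ⟨e1, he1, h11, h12, heq1⟩ y2 ⟨e2, he2, h21, h22, heq2⟩
      have hee : e1 ⊓ e2 ∈ U := hU.1.2.2.1 e1 he1 e2 he2
      have hle1 : e1 ⊓ e2 ≤ S.p a := inf_le_left.trans h11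
      refine ⟨S.res a (e1 ⊓ e2) hle1, res_mem_GU S hee hle1, ?_, ?_⟩
      · refine ⟨by rw [S.p_res]; exact inf_le_left.trans h12, ?_⟩
        calc S.res a (e1 ⊓ e2) hle1
            = S.res (S.res a e1 h11) (e1 ⊓ e2) (by rw [S.p_res]; exact inf_le_left) :=
              (S.res_comp a e1 (e1 ⊓ e2) h11 inf_le_left hle1 _).symm
          _ = S.res (S.res y1 e1 h12) (e1 ⊓ e2) (by rw [S.p_res]; exact inf_le_left) :=
              res_congr S heq1 rfl _ _
          _ = S.res y1 (e1 ⊓ e2) (inf_le_left.trans h12) :=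
              S.res_comp y1 e1 (e1 ⊓ e2) h12 inf_le_left _ _
          _ = S.res y1 (S.p (S.res a (e1 ⊓ e2) hle1)) _ :=
              res_congr S rfl (S.p_res a (e1 ⊓ e2) hle1).symm _ _
      · refine ⟨by rw [S.p_res]; exact inf_le_right.trans h22, ?_⟩
        calc S.res a (e1 ⊓ e2) hle1
            = S.res (S.res a e2 h21) (e1 ⊓ e2) (by rw [S.p_res]; exact inf_le_right) :=
              (S.res_comp a e2 (e1 ⊓ e2) h21 inf_le_right hle1 _).symm
          _ = S.res (S.res y2 e2 h22) (e1 ⊓ e2) (by rw [S.p_res]; exact inf_le_right) :=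
              res_congr S heq2 rfl _ _
          _ = S.res y2 (e1 ⊓ e2) (inf_le_right.trans h22) :=
              S.res_comp y2 e2 (e1 ⊓ e2) h22 inf_le_right _ _
          _ = S.res y2 (S.p (S.res a (e1 ⊓ e2) hle1)) _ :=
              res_congr S rfl (S.p_res a (e1 ⊓ e2) hle1).symm _ _
    · rintro y ⟨e, heU, h1, h2, heq⟩ w hyw
      exact ⟨e, heU, h1, h2.trans hyw.1, heq.trans (res_of_le S hyw h2 (h2.trans hyw.1))⟩
  have hproper : S.IsProperFilterX (GU S a U) :=
    ⟨hfil, fun h => hzero (h ▸ Set.mem_univ _)⟩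
  refine ⟨hproper, fun H hH hsub => ?_⟩
  refine Set.Subset.antisymm hsub fun y hy => ?_
  have haH : a ∈ H := hsub (self_mem_GU S ha)
  obtain ⟨z, hzH, hza, hzy⟩ := hH.1.2.1 a haH y hy
  have hpz : S.p z ∈ U := by
    refine hU.2 _ fun e heU hbot => ?_
    have hmem : S.res a (e ⊓ S.p a) (inf_le_right) ∈ H :=
      hsub (res_mem_GU S (hU.1.2.2.1 e heU (S.p a) ha) inf_le_right)
    obtain ⟨w, hwH, hw1, hw2⟩ := hH.1.2.1 z hzH _ hmem
    have hpw : S.p w ≤ ⊥ := by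
      rw [← hbot]
      refine le_inf hw1.1 ?_
      have := hw2.1
      rw [S.p_res] at this
      exact this.trans inf_le_left
    have : w = S.zero := S.eq_zero w (le_bot_iff.mp hpw)
    exact hH.2 (filter_univ_of_zero_mem S hH.1 (this ▸ hwH))
  exact ⟨S.p z, hpz, hza.1, hzy.1, hza.2.symm.trans hzy.2⟩

/-- The projection of an ultrafilter of `X` is "ultra" in `B`. -/
theorem X_ultra {G : Set S.X} (hG : S.IsUltrafilterX G) (b : B)
    (hb : ∀ g ∈ G, b ⊓ S.p g ≠ ⊥) : ∃ x ∈ G, S.p x ≤ b := by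
  set H : Set S.X := {y | ∃ g ∈ G, S.le (S.res g (b ⊓ S.p g) inf_le_right) y} with hHdef
  have key : ∀ {g1 g2 : S.X}, S.le g1 g2 →
      S.le (S.res g1 (b ⊓ S.p g1) inf_le_right) (S.res g2 (b ⊓ S.p g2) inf_le_right) := by
    intro g1 g2 h12
    have hle : b ⊓ S.p g1 ≤ b ⊓ S.p g2 := inf_le_inf_left b h12.1
    refine ⟨by rw [S.p_res, S.p_res]; exact hle, ?_⟩
    calc S.res g1 (b ⊓ S.p g1) inf_le_right
        = S.res g2 (b ⊓ S.p g1) (inf_le_right.trans h12.1) :=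
          res_of_le S h12 inf_le_right _
      _ = S.res (S.res g2 (b ⊓ S.p g2) inf_le_right) (b ⊓ S.p g1)
          (by rw [S.p_res]; exact hle) :=
          (S.res_comp g2 (b ⊓ S.p g2) (b ⊓ S.p g1) inf_le_right hle _ _).symm
      _ = S.res (S.res g2 (b ⊓ S.p g2) inf_le_right)
          (S.p (S.res g1 (b ⊓ S.p g1) inf_le_right)) _ :=
          res_congr S rfl (S.p_res g1 (b ⊓ S.p g1) inf_le_right).symm _ _
  have hfil : S.IsFilterX H := by
    refine ⟨?_, ?_, ?_⟩
    · obtain ⟨g, hg⟩ := hG.1.1.1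
      exact ⟨S.res g (b ⊓ S.p g) inf_le_right, g, hg, le_refl' S _⟩
    · rintro y1 ⟨g1, hg1, h1⟩ y2 ⟨g2, hg2, h2⟩
      obtain ⟨g, hgG, hgg1, hgg2⟩ := hG.1.1.2.1 g1 hg1 g2 hg2
      exact ⟨S.res g (b ⊓ S.p g) inf_le_right, ⟨g, hgG, le_refl' S _⟩,
        le_trans' S (key hgg1) h1, le_trans' S (key hgg2) h2⟩
    · rintro y ⟨g, hgG, h⟩ w hyw
      exact ⟨g, hgG, le_trans' S h hyw⟩
  have hGH : G ⊆ H := fun g hg => ⟨g, hg, res_le' S g _ inf_le_right⟩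
  have hproper : H ≠ Set.univ := by
    intro h
    have h0 : S.zero ∈ H := h ▸ Set.mem_univ _
    obtain ⟨g, hgG, hle⟩ := h0
    have : b ⊓ S.p g ≤ ⊥ := by
      have := hle.1
      rwa [S.p_res, p_zero S] at this
    exact hb g hgG (le_bot_iff.mp this)
  have : G = H := hG.2 H ⟨hfil, hproper⟩ hGH
  obtain ⟨g, hg⟩ := hG.1.1.1
  refine ⟨S.res g (b ⊓ S.p g) inf_le_right, ?_, by rw [S.p_res]; exact inf_le_left⟩
  rw [this]
  exact ⟨g, hg, le_refl' S _⟩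

end Aux

open BooleanSet in
/-- Properties of the sets `L a` of ultrafilters containing `a`:
`L a ⊆ L b` iff `a ≤ b`; `L a = L b` iff `a = b`; and if `a ∼ b` then
`L (a ∨ b) = L a ∪ L b`. -/
theorem booleanSet_L_properties {B : Type*} [GeneralizedBooleanAlgebra B]
    (S : BooleanSet B) :
    (∀ a b : S.X, Lset S a ⊆ Lset S b ↔ S.le a b) ∧
    (∀ a b : S.X, Lset S a = Lset S b ↔ a = b) ∧
    (∀ a b j : S.X, S.Compatible a b → S.IsJoin j a b →
      Lset S j = Lset S a ∪ Lset S b) := by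
  have part1 : ∀ a b : S.X, Lset S a ⊆ Lset S b ↔ S.le a b := by
    intro a b
    constructor
    · intro hsub
      by_contra hnle
      suffices hex : ∃ U : Set B, IsUltraB U ∧ S.p a ∈ U ∧ b ∉ GU S a U by
        obtain ⟨U, hU, haU, hbU⟩ := hex
        exact hbU (hsub ⟨GU_ultrafilter S hU haU, self_mem_GU S haU⟩).2
      by_cases hpab : S.p a ≤ S.p b
      · -- `a` and its "restriction of `b`" differ; separate by an ultrafilter avoiding
        -- the agreement ideal `D`.
        set a' : S.X := S.res b (S.p a) hpab with ha'def
        have hpa' : S.p a' = S.p a := S.p_res b (S.p a) hpab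
        have hne : a ≠ a' := by
          intro h
          exact hnle ⟨hpab, h⟩
        set D : Set B :=
          {e | ∃ (h : e ≤ S.p a) (h' : e ≤ S.p a'), S.res a e h = S.res a' e h'} with hDdef
        have Ddown : ∀ e ∈ D, ∀ f, f ≤ e → f ∈ D := by
          rintro e ⟨h, h', heq⟩ f hfe
          refine ⟨hfe.trans h, hfe.trans h', ?_⟩
          calc S.res a f (hfe.trans h)
              = S.res (S.res a e h) f (by rw [S.p_res]; exact hfe) :=
                (S.res_comp a e f h hfe _ _).symm
            _ = S.res (S.res a' e h') f (by rw [S.p_res]; exact hfe) :=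
                res_congr S heq rfl _ _
            _ = S.res a' f (hfe.trans h') := S.res_comp a' e f h' hfe _ _
        have Djoin : ∀ e ∈ D, ∀ f ∈ D, e ⊔ f ∈ D := by
          rintro e ⟨h1, h1', heq1⟩ f ⟨h2, h2', heq2⟩
          exact ⟨sup_le h1 h2, sup_le h1' h2', res_glue S h1 h1' h2 h2' heq1 heq2⟩
        have Dbot : ⊥ ∈ D := by
          refine ⟨bot_le, bot_le, ?_⟩
          rw [S.eq_zero (S.res a ⊥ bot_le) (S.p_res a ⊥ bot_le),
            S.eq_zero (S.res a' ⊥ bot_le) (S.p_res a' ⊥ bot_le)]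
        have DnotPa : S.p a ∉ D := by
          rintro ⟨h, h', heq⟩
          refine hne ?_
          calc a = S.res a (S.p a) h := (S.res_self a).symm
            _ = S.res a' (S.p a) h' := heq
            _ = S.res a' (S.p a') le_rfl := res_congr S rfl hpa'.symm _ _
            _ = a' := S.res_self a'
        set F : Set B := {x | ∃ d ∈ D, S.p a \ d ≤ x} with hFdef
        have hF : IsPFilterB F := by
          refine ⟨⟨S.p a, ⊥, Dbot, by rw [sdiff_bot]⟩, ?_, ?_, ?_⟩
          · rintro ⟨d, hd, hle⟩
            exact DnotPa (Ddown d hd (S.p a) (sdiff_eq_bot_iff.mp (le_bot_iff.mp hle)))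
          · rintro x ⟨d1, hd1, h1⟩ y ⟨d2, hd2, h2⟩
            refine ⟨d1 ⊔ d2, Djoin d1 hd1 d2 hd2, ?_⟩
            rw [sdiff_sup]
            exact inf_le_inf h1 h2
          · rintro x ⟨d, hd, h⟩ y hxy
            exact ⟨d, hd, h.trans hxy⟩
        obtain ⟨U, hFU, hU⟩ := exists_ultraB hF
        have haU : S.p a ∈ U := hFU ⟨⊥, Dbot, by rw [sdiff_bot]⟩
        refine ⟨U, hU, haU, ?_⟩
        rintro ⟨e, heU, h1, h2, heq⟩
        have heD : e ∈ D := by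
          refine ⟨h1, by rw [hpa']; exact h1, ?_⟩
          calc S.res a e h1 = S.res b e h2 := heq
            _ = S.res a' e (by rw [hpa']; exact h1) :=
              (S.res_comp b (S.p a) e hpab h1 h2 _).symm
        have hmem : e ⊓ (S.p a \ e) ∈ U :=
          hU.1.2.2.1 e heU _ (hFU ⟨e, heD, le_rfl⟩)
        rw [inf_sdiff_self_right] at hmem
        exact hU.1.2.1 hmem
      · -- `p a \ p b ≠ ⊥`: take an ultrafilter containing it.
        have hc : S.p a \ S.p b ≠ ⊥ := fun h => hpab (sdiff_eq_bot_iff.mp h)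
        have hF : IsPFilterB (Set.Ici (S.p a \ S.p b)) := by
          refine ⟨⟨_, le_rfl⟩, fun h => hc (le_bot_iff.mp h), ?_, ?_⟩
          · exact fun x hx y hy => le_inf hx hy
          · exact fun x hx y hxy => hx.trans hxy
        obtain ⟨U, hFU, hU⟩ := exists_ultraB hF
        have hcU : S.p a \ S.p b ∈ U := hFU le_rfl
        have haU : S.p a ∈ U := hU.1.2.2.2 _ hcU _ sdiff_le
        refine ⟨U, hU, haU, ?_⟩
        rintro ⟨e, heU, h1, h2, -⟩
        have hmem : e ⊓ (S.p a \ S.p b) ∈ U := hU.1.2.2.1 e heU _ hcU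
        have : e ⊓ (S.p a \ S.p b) ≤ ⊥ := by
          rw [← inf_sdiff_self_right (x := S.p b) (y := S.p a)]
          exact inf_le_inf_right _ h2
        rw [le_bot_iff.mp this] at hmem
        exact hU.1.2.1 hmem
    · intro hab G hG
      exact ⟨hG.1, hG.1.1.1.2.2 a hG.2 b hab⟩
  refine ⟨part1, ?_, ?_⟩
  · intro a b
    constructor
    · intro h
      exact le_antisymm' S ((part1 a b).mp h.le) ((part1 b a).mp h.ge)
    · rintro rfl; rfl
  · intro a b j hcomp hj
    have haj : S.le a j := hj.1
    have hbj : S.le b j := hj.2.1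
    have hpj : S.p j = S.p a ⊔ S.p b := by
      refine le_antisymm ?_ (sup_le haj.1 hbj.1)
      set z : S.X := S.res j (S.p a ⊔ S.p b) (sup_le haj.1 hbj.1) with hzdef
      have haz : S.le a z := by
        refine ⟨by rw [S.p_res]; exact le_sup_left, ?_⟩
        calc a = S.res j (S.p a) haj.1 := haj.2
          _ = S.res z (S.p a) (by rw [S.p_res]; exact le_sup_left) :=
            (S.res_comp j (S.p a ⊔ S.p b) (S.p a) _ le_sup_left haj.1 _).symm
      have hbz : S.le b z := by
        refine ⟨by rw [S.p_res]; exact le_sup_right, ?_⟩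
        calc b = S.res j (S.p b) hbj.1 := hbj.2
          _ = S.res z (S.p b) (by rw [S.p_res]; exact le_sup_right) :=
            (S.res_comp j (S.p a ⊔ S.p b) (S.p b) _ le_sup_right hbj.1 _).symm
      have := (hj.2.2 z haz hbz).1
      rwa [S.p_res] at this
    refine Set.Subset.antisymm ?_ ?_
    · rintro G ⟨hG, hjG⟩
      by_cases haG : a ∈ G
      · exact Or.inl ⟨hG, haG⟩
      · refine Or.inr ⟨hG, ?_⟩
        have hcl : ∃ g ∈ G, S.p a ⊓ S.p g = ⊥ := by
          by_contra h
          push_neg at h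
          obtain ⟨x, hxG, hx⟩ := X_ultra S hG (S.p a) h
          obtain ⟨z, hzG, hzx, hzj⟩ := hG.1.1.2.1 x hxG j hjG
          have hpza : S.p z ≤ S.p a := hzx.1.trans hx
          have hza : S.le z a := by
            refine ⟨hpza, ?_⟩
            calc z = S.res j (S.p z) hzj.1 := hzj.2
              _ = S.res (S.res j (S.p a) haj.1) (S.p z)
                  (by rw [S.p_res]; exact hpza) :=
                (S.res_comp j (S.p a) (S.p z) haj.1 hpza hzj.1 _).symm
              _ = S.res a (S.p z) hpza := res_congr S haj.2.symm rfl _ _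
          exact haG (hG.1.1.2.2 z hzG a hza)
        obtain ⟨g0, hg0G, hg0⟩ := hcl
        obtain ⟨z, hzG, hzg, hzj⟩ := hG.1.1.2.1 g0 hg0G j hjG
        have h1 : S.p z ⊓ S.p a = ⊥ := by
          refine le_bot_iff.mp ?_
          rw [← hg0]
          exact le_inf inf_le_right (inf_le_left.trans hzg.1)
        have hpzb : S.p z ≤ S.p b := by
          calc S.p z = S.p z ⊓ (S.p a ⊔ S.p b) :=
              (inf_eq_left.mpr (hpj ▸ hzj.1)).symm
            _ = (S.p z ⊓ S.p a) ⊔ (S.p z ⊓ S.p b) := inf_sup_left ..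
            _ = S.p z ⊓ S.p b := by rw [h1, bot_sup_eq]
            _ ≤ S.p b := inf_le_right
        have hzb : S.le z b := by
          refine ⟨hpzb, ?_⟩
          calc z = S.res j (S.p z) hzj.1 := hzj.2
            _ = S.res (S.res j (S.p b) hbj.1) (S.p z)
                (by rw [S.p_res]; exact hpzb) :=
              (S.res_comp j (S.p b) (S.p z) hbj.1 hpzb hzj.1 _).symm
            _ = S.res b (S.p z) hpzb := res_congr S hbj.2.symm rfl _ _
        exact hG.1.1.2.2 z hzG b hzb
    · rintro G (⟨hG, haG⟩ | ⟨hG, hbG⟩)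
      · exact ⟨hG, hG.1.1.2.2 a haG j haj⟩
      · exact ⟨hG, hG.1.1.2.2 b hbG j hbj⟩
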